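/- Let P*_{W|XY} be an optimal test channel achieving R(r1*,r2*|P_XY), and let P_{W*}, P_{X|W*}, P_{Y|W*} be the induced output distribution and conditional distributions. Then for every (x,y) in the support of P_XY and every w in the support of P*_{W|XY}(·|x,y), Λ(x,y|P_{W*},P_{X|W*},P_{Y|W*},λ1*,λ2*) = log( P*_{W|XY}(w|x,y) / P_{W*}(w) ) + λ1*( log(1/P_{X|W*}(x|w)) − r1* ) + λ2*( log(1/P_{Y|W*}(y|w)) − r2* ); in particular the right-hand side does not depend on the choice of such w. -/

import Mathlib

open Finset Filter MeasureTheory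

attribute [local instance] Classical.propDecidable

namespace GW

noncomputable section

/-- Shannon entropy (base 2) of a distribution on a finite alphabet,
with the convention `0 * log 0 = 0`. -/
def ent {α : Type*} [Fintype α] (p : α → ℝ) : ℝ := -∑ a, p a * Real.logb 2 (p a)

/-- `p` is a probability distribution on a finite alphabet. -/
def IsProb {α : Type*} [Fintype α] (p : α → ℝ) : Prop :=
  (∀ a, 0 ≤ p a) ∧ ∑ a, p a = 1

/-- `K` is a channel (a conditional probability distribution). -/
def IsChannel {α β : Type*} [Fintype α] [Fintype β] (K : α → β → ℝ) : Prop :=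
  ∀ a, IsProb (K a)

variable {𝒳 𝒴 𝒲 : Type*} [Fintype 𝒳] [Fintype 𝒴] [Fintype 𝒲]

/-- Output distribution `P_W` on `𝒲` induced by the source `p` on `𝒳 × 𝒴`
and the test channel `K`. -/
def outW (p : 𝒳 × 𝒴 → ℝ) (K : 𝒳 × 𝒴 → 𝒲 → ℝ) (w : 𝒲) : ℝ := ∑ a, p a * K a w

/-- Joint distribution of `(W, X, Y)`. -/
def jointW (p : 𝒳 × 𝒴 → ℝ) (K : 𝒳 × 𝒴 → 𝒲 → ℝ) : 𝒲 × 𝒳 × 𝒴 → ℝ :=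
  fun z => p z.2 * K z.2 z.1

/-- Joint distribution of `(W, X)`. -/
def margWX (p : 𝒳 × 𝒴 → ℝ) (K : 𝒳 × 𝒴 → 𝒲 → ℝ) : 𝒲 × 𝒳 → ℝ :=
  fun z => ∑ y, p (z.2, y) * K (z.2, y) z.1

/-- Joint distribution of `(W, Y)`. -/
def margWY (p : 𝒳 × 𝒴 → ℝ) (K : 𝒳 × 𝒴 → 𝒲 → ℝ) : 𝒲 × 𝒴 → ℝ :=
  fun z => ∑ x, p (x, z.2) * K (x, z.2) z.1

/-- Mutual information `I(W ∧ X,Y)` (base 2). -/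
def mutInfoW (p : 𝒳 × 𝒴 → ℝ) (K : 𝒳 × 𝒴 → 𝒲 → ℝ) : ℝ :=
  ent (outW p K) + ent p - ent (jointW p K)

/-- Conditional entropy `H(X|W)`. -/
def condEntX (p : 𝒳 × 𝒴 → ℝ) (K : 𝒳 × 𝒴 → 𝒲 → ℝ) : ℝ :=
  ent (margWX p K) - ent (outW p K)

/-- Conditional entropy `H(Y|W)`. -/
def condEntY (p : 𝒳 × 𝒴 → ℝ) (K : 𝒳 × 𝒴 → 𝒲 → ℝ) : ℝ :=
  ent (margWY p K) - ent (outW p K)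

/-- Conditional distribution `P_{X|W}` induced by `p` and `K`. -/
def condXW (p : 𝒳 × 𝒴 → ℝ) (K : 𝒳 × 𝒴 → 𝒲 → ℝ) (w : 𝒲) (x : 𝒳) : ℝ :=
  margWX p K (w, x) / outW p K w

/-- Conditional distribution `P_{Y|W}` induced by `p` and `K`. -/
def condYW (p : 𝒳 × 𝒴 → ℝ) (K : 𝒳 × 𝒴 → 𝒲 → ℝ) (w : 𝒲) (y : 𝒴) : ℝ :=
  margWY p K (w, y) / outW p K w

/-- The Gray–Wyner first-order rate function
`R(r1,r2|P) = min { I(W ∧ X,Y) : |𝒲| ≤ |𝒳||𝒴|+2, H(X|W) ≤ r1, H(Y|W) ≤ r2 }`. -/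
def Rgw (p : 𝒳 × 𝒴 → ℝ) (r1 r2 : ℝ) : ℝ :=
  sInf { ρ : ℝ | ∃ k, k ≤ Fintype.card 𝒳 * Fintype.card 𝒴 + 2 ∧
    ∃ K : 𝒳 × 𝒴 → Fin k → ℝ, IsChannel K ∧
      condEntX p K ≤ r1 ∧ condEntY p K ≤ r2 ∧ ρ = mutInfoW p K }

/-- `K` is an optimal test channel achieving `R(r1,r2|p)`. -/
def IsOptChannel (p : 𝒳 × 𝒴 → ℝ) (r1 r2 : ℝ) {k : ℕ} (K : 𝒳 × 𝒴 → Fin k → ℝ) : Prop :=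
  k ≤ Fintype.card 𝒳 * Fintype.card 𝒴 + 2 ∧ IsChannel K ∧
    condEntX p K ≤ r1 ∧ condEntY p K ≤ r2 ∧ mutInfoW p K = Rgw p r1 r2

/-- The function `Λ(x,y|Q_W̄, Q_{X̂|Ŵ}, Q_{Ŷ|Ŵ}, λ1, λ2)`;
terms with a vanishing conditional probability are taken to be `0`. -/
def Lam (r1 r2 lam1 lam2 : ℝ) (QW : 𝒲 → ℝ) (QX : 𝒲 → 𝒳 → ℝ) (QY : 𝒲 → 𝒴 → ℝ)
    (x : 𝒳) (y : 𝒴) : ℝ :=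
  - Real.logb 2 (∑ w, QW w *
      (if QX w x = 0 ∨ QY w y = 0 then 0 else
        (2 : ℝ) ^ (lam1 * (r1 + Real.logb 2 (QX w x)) + lam2 * (r2 + Real.logb 2 (QY w y)))))

/-- The function
`F(P_{W|XY},P_W̄,P_{X̂|Ŵ},P_{Ŷ|Ŵ}) = D(P_{W|XY}‖P_W̄|P_XY) + λ1 E[log 1/P_{X̂|Ŵ}(X|W) - r1] + λ2 E[log 1/P_{Ŷ|Ŵ}(Y|W) - r2]`. -/
def Ffun (p : 𝒳 × 𝒴 → ℝ) (r1 r2 lam1 lam2 : ℝ) (K : 𝒳 × 𝒴 → 𝒲 → ℝ)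
    (QW : 𝒲 → ℝ) (QX : 𝒲 → 𝒳 → ℝ) (QY : 𝒲 → 𝒴 → ℝ) : ℝ :=
  (∑ a : 𝒳 × 𝒴, ∑ w, p a * K a w * Real.logb 2 (K a w / QW w))
    + lam1 * (∑ a : 𝒳 × 𝒴, ∑ w, p a * K a w * (-Real.logb 2 (QX w a.1) - r1))
    + lam2 * (∑ a : 𝒳 × 𝒴, ∑ w, p a * K a w * (-Real.logb 2 (QY w a.2) - r2))

/-- The tilted information density for the Gray–Wyner network, built from an
(optimal) test channel `K` via its induced output and conditional distributions. -/
def tiltedInfo (p : 𝒳 × 𝒴 → ℝ) (r1 r2 lam1 lam2 : ℝ) {k : ℕ}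
    (K : 𝒳 × 𝒴 → Fin k → ℝ) (x : 𝒳) (y : 𝒴) : ℝ :=
  Lam r1 r2 lam1 lam2 (outW p K) (condXW p K) (condYW p K) x y

/-- The explicit optimizing channel of Lemma 1. -/
def Kstar (r1 r2 lam1 lam2 : ℝ) (QW : 𝒲 → ℝ) (QX : 𝒲 → 𝒳 → ℝ) (QY : 𝒲 → 𝒴 → ℝ) :
    𝒳 × 𝒴 → 𝒲 → ℝ :=
  fun a w => if QX w a.1 = 0 ∨ QY w a.2 = 0 then 0 else
    QW w * (2 : ℝ) ^ (Lam r1 r2 lam1 lam2 QW QX QY a.1 a.2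
      + lam1 * (r1 + Real.logb 2 (QX w a.1)) + lam2 * (r2 + Real.logb 2 (QY w a.2)))

/-- A Gray–Wyner code of blocklength `n` with message sets of sizes `M0`, `M1`, `M2`. -/
structure GWCode (𝒳 𝒴 : Type*) (n M0 M1 M2 : ℕ) where
  enc0 : (Fin n → 𝒳 × 𝒴) → Fin M0
  enc1 : (Fin n → 𝒳 × 𝒴) → Fin M1
  enc2 : (Fin n → 𝒳 × 𝒴) → Fin M2
  dec1 : Fin M0 × Fin M1 → Fin n → 𝒳
  dec2 : Fin M0 × Fin M2 → Fin n → 𝒴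

/-- Correct decoding of the source word `f`. -/
def GWCode.correct {𝒳 𝒴 : Type*} {n M0 M1 M2 : ℕ} (C : GWCode 𝒳 𝒴 n M0 M1 M2)
    (f : Fin n → 𝒳 × 𝒴) : Prop :=
  ∀ i, C.dec1 (C.enc0 f, C.enc1 f) i = (f i).1 ∧ C.dec2 (C.enc0 f, C.enc2 f) i = (f i).2

/-- Error probability of a code under the source distribution `P` on words. -/
def PeGW {n M0 M1 M2 : ℕ} (C : GWCode 𝒳 𝒴 n M0 M1 M2) (P : (Fin n → 𝒳 × 𝒴) → ℝ) : ℝ :=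
  ∑ f ∈ Finset.univ.filter (fun f => ¬ C.correct f), P f

/-- Correct probability of a code. -/
def PcGW {n M0 M1 M2 : ℕ} (C : GWCode 𝒳 𝒴 n M0 M1 M2) (P : (Fin n → 𝒳 × 𝒴) → ℝ) : ℝ :=
  1 - PeGW C P

/-- The i.i.d. (product) distribution on length-`n` source words. -/
def prodDist (p : 𝒳 × 𝒴 → ℝ) (n : ℕ) : (Fin n → 𝒳 × 𝒴) → ℝ := fun f => ∏ i, p (f i)

/-- First-order achievability of a rate triple for the Gray–Wyner network. -/
def GWAchievable (p : 𝒳 × 𝒴 → ℝ) (r0 r1 r2 : ℝ) : Prop :=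
  ∃ (M0 M1 M2 : ℕ → ℕ) (C : (n : ℕ) → GWCode 𝒳 𝒴 n (M0 n) (M1 n) (M2 n)),
    limsup (fun n : ℕ => Real.logb 2 (M0 n) / n) atTop ≤ r0 ∧
    limsup (fun n : ℕ => Real.logb 2 (M1 n) / n) atTop ≤ r1 ∧
    limsup (fun n : ℕ => Real.logb 2 (M2 n) / n) atTop ≤ r2 ∧
    Tendsto (fun n : ℕ => PeGW (C n) (prodDist p n)) atTop (nhds 0)

/-- Second-order `(ε, r0*, r1*, r2*)`-achievability of `(L0, L1, L2)`. -/
def GWSecondAchievable (p : 𝒳 × 𝒴 → ℝ) (ε r0 r1 r2 L0 L1 L2 : ℝ) : Prop :=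
  ∃ (M0 M1 M2 : ℕ → ℕ) (C : (n : ℕ) → GWCode 𝒳 𝒴 n (M0 n) (M1 n) (M2 n)),
    limsup (fun n : ℕ => (Real.logb 2 (M0 n) - n * r0) / Real.sqrt n) atTop ≤ L0 ∧
    limsup (fun n : ℕ => (Real.logb 2 (M1 n) - n * r1) / Real.sqrt n) atTop ≤ L1 ∧
    limsup (fun n : ℕ => (Real.logb 2 (M2 n) - n * r2) / Real.sqrt n) atTop ≤ L2 ∧
    limsup (fun n : ℕ => PeGW (C n) (prodDist p n)) atTop ≤ ε

/-- Empirical distribution (type) of a sequence. -/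
def empDist {α : Type*} [Fintype α] {n : ℕ} (f : Fin n → α) (a : α) : ℝ :=
  ((Finset.univ.filter fun i => f i = a).card : ℝ) / n

/-- `p` is a type of length-`n` sequences. -/
def IsJointType {α : Type*} [Fintype α] (n : ℕ) (p : α → ℝ) : Prop :=
  ∃ f : Fin n → α, ∀ a, p a = empDist f a

/-- `V` is a conditional type (of length `n`) given the joint type `p`. -/
def IsCondType (n : ℕ) (p : 𝒳 × 𝒴 → ℝ) (V : 𝒳 × 𝒴 → 𝒲 → ℝ) : Prop :=
  IsChannel V ∧ ∀ a, 0 < p a → ∀ w, ∃ c : ℕ, V a w = c / (n * p a)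

/-- The uniform distribution on the type class of the joint type `p`. -/
def unifType (n : ℕ) (p : 𝒳 × 𝒴 → ℝ) : (Fin n → 𝒳 × 𝒴) → ℝ :=
  fun f => if ∀ a, empDist f a = p a then
    (1 : ℝ) / ((Finset.univ.filter fun g : Fin n → 𝒳 × 𝒴 => ∀ a, empDist g a = p a).card : ℝ)
  else 0

/-- The single-letter Gray–Wyner region `ℛ*_GW(P_XY)`. -/
def RegionGW (p : 𝒳 × 𝒴 → ℝ) : Set (ℝ × ℝ × ℝ) :=
  { r | ∃ k, k ≤ Fintype.card 𝒳 * Fintype.card 𝒴 + 2 ∧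
      ∃ K : 𝒳 × 𝒴 → Fin k → ℝ, IsChannel K ∧
        mutInfoW p K ≤ r.1 ∧ condEntX p K ≤ r.2.1 ∧ condEntY p K ≤ r.2.2 }

/-- `X - W - Y` forms a Markov chain (conditional independence given `W`). -/
def MarkovXWY {k : ℕ} (p : 𝒳 × 𝒴 → ℝ) (K : 𝒳 × 𝒴 → Fin k → ℝ) : Prop :=
  ∀ w x y, jointW p K (w, (x, y)) * outW p K w = margWX p K (w, x) * margWY p K (w, y)

/-- The part of the region lying on the Pangloss plane `r0 + r1 + r2 = H(X,Y)`. -/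
def PanglossSet (p : 𝒳 × 𝒴 → ℝ) : Set (ℝ × ℝ × ℝ) :=
  { r | r ∈ RegionGW p ∧ r.1 + r.2.1 + r.2.2 = ent p }

/-- The distribution corresponding to the parameter `θ`, with respect to the
labelling `e` of the support: `P_θ(e i) = θ i` for `i < m`, and the last mass
is `1 - ∑ θ`. -/
def paramDist {α : Type*} {m : ℕ} (e : Fin (m + 1) → α) (θ : Fin m → ℝ) (a : α) : ℝ :=
  (∑ i : Fin m, if e i.castSucc = a then θ i else 0) +
    (if e (Fin.last m) = a then 1 - ∑ i, θ i else 0)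

/-- Variance of `g` under the distribution `p`. -/
def varOf {α : Type*} [Fintype α] (p : α → ℝ) (g : α → ℝ) : ℝ :=
  ∑ a, p a * (g a - ∑ b, p b * g b) ^ 2

/-- The Gaussian upper-tail probability `Q(t)`. -/
def Qfun (t : ℝ) : ℝ :=
  ∫ u in Set.Ioi t, (1 / Real.sqrt (2 * Real.pi)) * Real.exp (-(u ^ 2) / 2)

end

end GW

open GW

/-!
An optimal test channel `K` minimises the Lagrangian
`I(W ∧ X,Y) + λ₁ (H(X|W) - r₁) + λ₂ (H(Y|W) - r₂)` over all test channels: both constraints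
are active since `λᵢ > 0`, and `R` lies above its tangent plane at `(r₁, r₂)` because it is
convex (time sharing, followed by a Carathéodory reduction of the alphabet to `|𝒳||𝒴| + 2`
letters). Replacing `P_W`, `P_{X|W}`, `P_{Y|W}` by other distributions `Q` only increases the
Lagrangian (Gibbs), which gives `F`; for fixed `Q`, `F` is minimised by the tilted channel
`Kstar`, with value `E[Λ(X,Y)]`. Hence
`R = F(K) = E[D(K(·|X,Y) ‖ Kstar(·|X,Y))] + E[Λ(X,Y)] ≥ E[Λ(X,Y)] ≥ R`,
so `K = Kstar` on the support, which is the formula for `Λ`.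
-/

namespace GW

open Real InformationTheory

section Gibbs

variable {α : Type*} [Fintype α] {f g : α → ℝ}

lemma sum_mul_logb_div_eq (hfg : ∀ a, g a = 0 → f a = 0) :
    ∑ a, f a * logb 2 (f a / g a)
      = ((∑ a, g a * klFun (f a / g a)) + (∑ a, f a - ∑ a, g a)) / log 2 := by
  simp_rw [logb, ← mul_div_assoc, ← Finset.sum_div, ← Finset.sum_sub_distrib,
    ← Finset.sum_add_distrib]
  congr 1
  refine Finset.sum_congr rfl fun a _ => ?_
  rcases eq_or_ne (g a) 0 with hg | hg
  · simp [hg, hfg a hg]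
  · rw [klFun_apply]
    field_simp
    ring

theorem sum_mul_logb_div_nonneg (hf : ∀ a, 0 ≤ f a) (hg : ∀ a, 0 ≤ g a)
    (hsum : ∑ a, g a ≤ ∑ a, f a) (hfg : ∀ a, g a = 0 → f a = 0) :
    0 ≤ ∑ a, f a * logb 2 (f a / g a) := by
  rw [sum_mul_logb_div_eq hfg]
  have := Finset.sum_nonneg fun a (_ : a ∈ Finset.univ) =>
    mul_nonneg (hg a) (klFun_nonneg (div_nonneg (hf a) (hg a)))
  exact div_nonneg (by linarith) (log_nonneg one_le_two)

theorem eq_of_sum_mul_logb_div_nonpos (hf : ∀ a, 0 ≤ f a) (hg : ∀ a, 0 ≤ g a)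
    (hsum : ∑ a, g a ≤ ∑ a, f a) (hfg : ∀ a, g a = 0 → f a = 0)
    (h : ∑ a, f a * logb 2 (f a / g a) ≤ 0) {a : α} (ha : f a ≠ 0) : f a = g a := by
  rw [sum_mul_logb_div_eq hfg, div_nonpos_iff] at h
  have hlog : 0 < log 2 := log_pos one_lt_two
  have hterm := fun a (_ : a ∈ Finset.univ) =>
    mul_nonneg (hg a) (klFun_nonneg (div_nonneg (hf a) (hg a)))
  have hzero : ∑ a, g a * klFun (f a / g a) = 0 :=
    le_antisymm (by rcases h with h | h <;> linarith [h.1, h.2]) (Finset.sum_nonneg hterm)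
  have hga : g a ≠ 0 := fun h0 => ha (hfg a h0)
  have hkl := (Finset.sum_eq_zero_iff_of_nonneg hterm).1 hzero a (Finset.mem_univ a)
  rw [mul_eq_zero, or_iff_right hga, klFun_eq_zero_iff (div_nonneg (hf a) (hg a)),
    div_eq_one_iff_eq hga] at hkl
  exact hkl

end Gibbs

section Entropy

theorem ent_sub_ent_marginal {β α : Type*} [Fintype β] [Fintype α] (J : β × α → ℝ)
    (hJ : ∀ z, 0 ≤ J z) :
    ent J - ent (fun b => ∑ a, J (b, a))
      = -∑ b, ∑ a, J (b, a) * logb 2 (J (b, a) / ∑ a', J (b, a')) := by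
  simp only [ent, Fintype.sum_prod_type, Finset.sum_mul, neg_sub_neg,
    ← Finset.sum_sub_distrib, ← Finset.sum_neg_distrib]
  refine Finset.sum_congr rfl fun b _ => Finset.sum_congr rfl fun a _ => ?_
  rcases (hJ (b, a)).eq_or_lt with h0 | hpos
  · simp [← h0]
  · have hm : 0 < ∑ a', J (b, a') :=
      hpos.trans_le (Finset.single_le_sum (fun a' _ => hJ (b, a')) (Finset.mem_univ a))
    rw [logb_div hpos.ne' hm.ne']
    ring

theorem ent_mul {β α : Type*} [Fintype β] [Fintype α] (μ : β → ℝ) (q : β → α → ℝ)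
    (hμ : ∀ b, 0 ≤ μ b) (hq : ∀ b, μ b ≠ 0 → IsProb (q b)) :
    ent (fun z : β × α => μ z.1 * q z.1 z.2) = ent μ + ∑ b, μ b * ent (q b) := by
  have hmarg : (fun b => ∑ a, μ b * q b a) = μ := by
    funext b
    rcases eq_or_ne (μ b) 0 with h0 | hne
    · simp [h0]
    · rw [← Finset.mul_sum, (hq b hne).2, mul_one]
  have key := ent_sub_ent_marginal (fun z : β × α => μ z.1 * q z.1 z.2) fun z => by
    rcases eq_or_ne (μ z.1) 0 with h0 | hne
    · simp [h0]
    · exact mul_nonneg (hμ _) ((hq _ hne).1 _)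
  rw [hmarg, sub_eq_iff_eq_add'] at key
  rw [key, add_right_inj, ← Finset.sum_neg_distrib]
  refine Finset.sum_congr rfl fun b _ => ?_
  rcases eq_or_ne (μ b) 0 with h0 | hne
  · simp [h0]
  · simp only [ent, mul_neg, ← Finset.mul_sum, neg_inj]
    rw [(hq b hne).2, mul_one, Finset.mul_sum]
    refine Finset.sum_congr rfl fun a _ => ?_
    rw [mul_div_cancel_left₀ _ hne, mul_assoc]

theorem IsProb.ent_nonneg {α : Type*} [Fintype α] {f : α → ℝ} (hf : IsProb f) :
    0 ≤ ent f := by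
  refine neg_nonneg.2 (Finset.sum_nonpos fun a _ => ?_)
  have hle : f a ≤ 1 :=
    hf.2 ▸ Finset.single_le_sum (fun b _ => hf.1 b) (Finset.mem_univ a)
  exact mul_nonpos_of_nonneg_of_nonpos (hf.1 a) (logb_nonpos one_lt_two (hf.1 a) hle)

lemma IsChannel.exists_ne_zero {α β : Type*} [Fintype α] [Fintype β] {K : α → β → ℝ}
    (hK : IsChannel K) (a : α) : ∃ b, K a b ≠ 0 :=
  (Finset.exists_ne_zero_of_sum_ne_zero (s := Finset.univ) (by simp [(hK a).2])).imp
    fun _ h => h.2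

theorem ent_single {α : Type*} [Fintype α] [DecidableEq α] (a : α) :
    ent (Pi.single a (1 : ℝ)) = 0 := by
  simp [ent, Pi.single_apply]

end Entropy

section Channel

variable {𝒳 𝒴 𝒲 : Type*} [Fintype 𝒳] [Fintype 𝒴] [Fintype 𝒲]
  {p : 𝒳 × 𝒴 → ℝ} {K : 𝒳 × 𝒴 → 𝒲 → ℝ}

lemma sum_sum_mul_eq_sum_outW (φ : 𝒲 → ℝ) :
    ∑ a, ∑ w, p a * K a w * φ w = ∑ w, outW p K w * φ w := by
  simp only [outW, Finset.sum_mul]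
  exact Finset.sum_comm

lemma sum_sum_mul_eq_sum_margWX (φ : 𝒲 → 𝒳 → ℝ) :
    ∑ a, ∑ w, p a * K a w * φ w a.1 = ∑ w, ∑ x, margWX p K (w, x) * φ w x := by
  rw [Finset.sum_comm]
  simp only [margWX, Finset.sum_mul, Fintype.sum_prod_type]

omit [Fintype 𝒲] in
lemma sum_margWX (w : 𝒲) : ∑ x, margWX p K (w, x) = outW p K w := by
  simp only [margWX, outW, Fintype.sum_prod_type]

omit [Fintype 𝒲] in
lemma sum_condXW_le_one (w : 𝒲) : ∑ x, condXW p K w x ≤ 1 := by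
  simp only [condXW, ← Finset.sum_div, sum_margWX]
  exact div_self_le_one _

omit [Fintype 𝒲] in
lemma outW_swap : outW (fun a => p a.swap) (fun a => K a.swap) = outW p K :=
  funext fun w => (Equiv.prodComm 𝒴 𝒳).sum_comp fun a => p a * K a w

omit [Fintype 𝒲] in
lemma condYW_eq_condXW_swap : condYW p K = condXW (fun a => p a.swap) (fun a => K a.swap) := by
  unfold condYW condXW
  rw [outW_swap]
  rfl

lemma condEntY_eq_condEntX_swap :
    condEntY p K = condEntX (fun a => p a.swap) (fun a => K a.swap) := by
  unfold condEntY condEntX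
  rw [outW_swap]
  rfl

omit [Fintype 𝒲] in
lemma IsProb.swap (hp : IsProb p) : IsProb (fun a : 𝒴 × 𝒳 => p a.swap) :=
  ⟨fun _ => hp.1 _, ((Equiv.prodComm 𝒴 𝒳).sum_comp p).trans hp.2⟩

lemma IsChannel.swap (hK : IsChannel K) : IsChannel (fun a : 𝒴 × 𝒳 => K a.swap) :=
  fun a => hK a.swap

omit [Fintype 𝒲] in
lemma sum_condYW_le_one (w : 𝒲) : ∑ y, condYW p K w y ≤ 1 := by
  rw [condYW_eq_condXW_swap]
  exact sum_condXW_le_one w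

variable (hp : IsProb p) (hK : IsChannel K)
include hp hK

lemma mul_nonneg_of_isChannel (a : 𝒳 × 𝒴) (w : 𝒲) : 0 ≤ p a * K a w :=
  mul_nonneg (hp.1 a) ((hK a).1 w)

lemma mul_le_outW (a : 𝒳 × 𝒴) (w : 𝒲) : p a * K a w ≤ outW p K w :=
  Finset.single_le_sum (fun a _ => mul_nonneg_of_isChannel hp hK a w) (Finset.mem_univ a)

lemma outW_nonneg (w : 𝒲) : 0 ≤ outW p K w :=
  Finset.sum_nonneg fun a _ => mul_nonneg_of_isChannel hp hK a w

lemma sum_outW : ∑ w, outW p K w = 1 := by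
  simpa only [mul_one, ← Finset.mul_sum, (hK _).2, hp.2] using
    (sum_sum_mul_eq_sum_outW (p := p) (K := K) fun _ => 1).symm

lemma margWX_nonneg (w : 𝒲) (x : 𝒳) : 0 ≤ margWX p K (w, x) :=
  Finset.sum_nonneg fun _ _ => mul_nonneg_of_isChannel hp hK _ w

lemma mul_le_margWX (a : 𝒳 × 𝒴) (w : 𝒲) : p a * K a w ≤ margWX p K (w, a.1) :=
  Finset.single_le_sum (f := fun y => p (a.1, y) * K (a.1, y) w)
    (fun _ _ => mul_nonneg_of_isChannel hp hK _ w) (Finset.mem_univ a.2)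

lemma condXW_nonneg (w : 𝒲) (x : 𝒳) : 0 ≤ condXW p K w x :=
  div_nonneg (margWX_nonneg hp hK w x) (outW_nonneg hp hK w)

lemma outW_pos {a : 𝒳 × 𝒴} {w : 𝒲} (h : p a * K a w ≠ 0) : 0 < outW p K w :=
  ((mul_nonneg_of_isChannel hp hK a w).lt_of_ne' h).trans_le (mul_le_outW hp hK a w)

lemma condXW_pos {a : 𝒳 × 𝒴} {w : 𝒲} (h : p a * K a w ≠ 0) : 0 < condXW p K w a.1 :=
  div_pos (((mul_nonneg_of_isChannel hp hK a w).lt_of_ne' h).trans_le (mul_le_margWX hp hK a w))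
    (outW_pos hp hK h)

theorem mutInfoW_eq_sum :
    mutInfoW p K = ∑ a, ∑ w, p a * K a w * logb 2 (K a w / outW p K w) := by
  have hJ := ent_sub_ent_marginal (jointW p K) fun z => mul_nonneg_of_isChannel hp hK z.2 z.1
  change ent (jointW p K) - ent (outW p K)
    = -∑ w, ∑ a, p a * K a w * logb 2 (p a * K a w / outW p K w) at hJ
  have hent : ent p = -∑ a, ∑ w, p a * K a w * logb 2 (p a) := by
    rw [ent]
    congr 1
    refine Finset.sum_congr rfl fun a _ => ?_
    rw [← Finset.sum_mul, ← Finset.mul_sum, (hK a).2, mul_one]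
  rw [mutInfoW, show ∀ u v j : ℝ, u + v - j = v - (j - u) by intros; ring, hJ, hent,
    Finset.sum_comm (γ := 𝒲), neg_sub_neg, ← Finset.sum_sub_distrib]
  refine Finset.sum_congr rfl fun a _ => ?_
  rw [← Finset.sum_sub_distrib]
  refine Finset.sum_congr rfl fun w _ => ?_
  rcases eq_or_ne (p a * K a w) 0 with h | h
  · simp [h]
  · have hpK := mul_ne_zero_iff.1 h
    rw [← mul_sub, mul_div_assoc, logb_mul hpK.1 (div_ne_zero hpK.2 (outW_pos hp hK h).ne'),
      add_sub_cancel_left]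

theorem condEntX_eq_sum :
    condEntX p K = ∑ a, ∑ w, p a * K a w * -logb 2 (condXW p K w a.1) := by
  have hJ := ent_sub_ent_marginal (margWX p K) fun z => margWX_nonneg hp hK z.1 z.2
  simp only [sum_margWX] at hJ
  rw [condEntX, hJ, sum_sum_mul_eq_sum_margWX (fun w x => -logb 2 (condXW p K w x))]
  simp only [condXW, mul_neg, Finset.sum_neg_distrib]

theorem mutInfoW_le_sum (QW : 𝒲 → ℝ) (hQ0 : ∀ w, 0 ≤ QW w) (hQ1 : ∑ w, QW w ≤ 1)
    (hac : ∀ a w, p a * K a w ≠ 0 → QW w ≠ 0) :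
    mutInfoW p K ≤ ∑ a, ∑ w, p a * K a w * logb 2 (K a w / QW w) := by
  have hG := sum_mul_logb_div_nonneg (outW_nonneg hp hK) hQ0 (by rw [sum_outW hp hK]; exact hQ1)
    fun w hw => by
      by_contra h
      rw [outW] at h
      obtain ⟨a, -, ha⟩ := Finset.exists_ne_zero_of_sum_ne_zero h
      exact hac a w ha hw
  have hsplit : ∑ a, ∑ w, p a * K a w * logb 2 (K a w / QW w)
      = mutInfoW p K + ∑ w, outW p K w * logb 2 (outW p K w / QW w) := by
    rw [mutInfoW_eq_sum hp hK, ← sum_sum_mul_eq_sum_outW, ← Finset.sum_add_distrib]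
    refine Finset.sum_congr rfl fun a _ => ?_
    rw [← Finset.sum_add_distrib]
    refine Finset.sum_congr rfl fun w _ => ?_
    rcases eq_or_ne (p a * K a w) 0 with h | h
    · simp [h]
    · have hout := (outW_pos hp hK h).ne'
      rw [← mul_add, ← logb_mul (div_ne_zero (mul_ne_zero_iff.1 h).2 hout)
        (div_ne_zero hout (hac a w h)), div_mul_div_cancel₀ hout]
  linarith

theorem condEntX_le_sum (QX : 𝒲 → 𝒳 → ℝ) (hQ0 : ∀ w x, 0 ≤ QX w x)
    (hQ1 : ∀ w, ∑ x, QX w x ≤ 1) (hac : ∀ a w, p a * K a w ≠ 0 → QX w a.1 ≠ 0) :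
    condEntX p K ≤ ∑ a, ∑ w, p a * K a w * -logb 2 (QX w a.1) := by
  have hsupp : ∀ w x, margWX p K (w, x) ≠ 0 → outW p K w ≠ 0 ∧ QX w x ≠ 0 := by
    intro w x h
    rw [margWX] at h
    obtain ⟨y, -, hy⟩ := Finset.exists_ne_zero_of_sum_ne_zero h
    exact ⟨(outW_pos hp hK hy).ne', hac (x, y) w hy⟩
  have hsum : ∑ z : 𝒲 × 𝒳, outW p K z.1 * QX z.1 z.2 ≤ ∑ z, margWX p K z := by
    simp only [Fintype.sum_prod_type, ← Finset.mul_sum, sum_margWX]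
    exact Finset.sum_le_sum fun w _ => mul_le_of_le_one_right (outW_nonneg hp hK w) (hQ1 w)
  have hG := sum_mul_logb_div_nonneg (f := margWX p K)
    (g := fun z => outW p K z.1 * QX z.1 z.2) (fun z => margWX_nonneg hp hK z.1 z.2)
    (fun z => mul_nonneg (outW_nonneg hp hK z.1) (hQ0 z.1 z.2)) hsum fun z hz => by
      by_contra h
      exact mul_ne_zero (hsupp z.1 z.2 h).1 (hsupp z.1 z.2 h).2 hz
  have hsplit : ∑ z : 𝒲 × 𝒳, margWX p K z * logb 2 (margWX p K z / (outW p K z.1 * QX z.1 z.2))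
      = ∑ w, ∑ x, margWX p K (w, x) * -logb 2 (QX w x)
        - ∑ w, ∑ x, margWX p K (w, x) * -logb 2 (condXW p K w x) := by
    simp only [Fintype.sum_prod_type, ← Finset.sum_sub_distrib]
    refine Finset.sum_congr rfl fun w _ => Finset.sum_congr rfl fun x _ => ?_
    rcases eq_or_ne (margWX p K (w, x)) 0 with h | h
    · simp [h]
    · rw [← mul_sub, ← div_div, logb_div (div_ne_zero h (hsupp w x h).1) (hsupp w x h).2,
        condXW]
      ring
  rw [condEntX_eq_sum hp hK, sum_sum_mul_eq_sum_margWX (fun w x => -logb 2 (condXW p K w x)),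
    sum_sum_mul_eq_sum_margWX (fun w x => -logb 2 (QX w x))]
  linarith

theorem mutInfoW_nonneg : 0 ≤ mutInfoW p K := by
  rw [mutInfoW_eq_sum hp hK]
  refine Finset.sum_nonneg fun a _ => ?_
  rcases eq_or_ne (p a) 0 with h | h
  · simp [h]
  simp_rw [mul_assoc, ← Finset.mul_sum]
  refine mul_nonneg (hp.1 a) (sum_mul_logb_div_nonneg (hK a).1 (outW_nonneg hp hK)
    (by rw [sum_outW hp hK, (hK a).2]) fun w hw => ?_)
  by_contra hKw
  exact (outW_pos hp hK (mul_ne_zero h hKw)).ne' hw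

lemma condYW_nonneg (w : 𝒲) (y : 𝒴) : 0 ≤ condYW p K w y := by
  rw [condYW_eq_condXW_swap]
  exact condXW_nonneg hp.swap hK.swap w y

lemma condYW_pos {a : 𝒳 × 𝒴} {w : 𝒲} (h : p a * K a w ≠ 0) : 0 < condYW p K w a.2 := by
  rw [condYW_eq_condXW_swap]
  exact condXW_pos hp.swap hK.swap (a := a.swap) h

lemma induced_ne_zero {a : 𝒳 × 𝒴} {w : 𝒲} (h : p a * K a w ≠ 0) :
    outW p K w ≠ 0 ∧ condXW p K w a.1 ≠ 0 ∧ condYW p K w a.2 ≠ 0 :=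
  ⟨(outW_pos hp hK h).ne', (condXW_pos hp hK h).ne', (condYW_pos hp hK h).ne'⟩

theorem condEntY_eq_sum :
    condEntY p K = ∑ a, ∑ w, p a * K a w * -logb 2 (condYW p K w a.2) := by
  rw [condEntY_eq_condEntX_swap, condEntX_eq_sum hp.swap hK.swap, ← condYW_eq_condXW_swap]
  exact (Equiv.prodComm 𝒴 𝒳).sum_comp fun a => ∑ w, p a * K a w * -logb 2 (condYW p K w a.2)

theorem condEntY_le_sum (QY : 𝒲 → 𝒴 → ℝ) (hQ0 : ∀ w y, 0 ≤ QY w y)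
    (hQ1 : ∀ w, ∑ y, QY w y ≤ 1) (hac : ∀ a w, p a * K a w ≠ 0 → QY w a.2 ≠ 0) :
    condEntY p K ≤ ∑ a, ∑ w, p a * K a w * -logb 2 (QY w a.2) := by
  rw [condEntY_eq_condEntX_swap]
  refine (condEntX_le_sum hp.swap hK.swap QY hQ0 hQ1 fun a w h => hac a.swap w h).trans_eq ?_
  exact (Equiv.prodComm 𝒴 𝒳).sum_comp fun a => ∑ w, p a * K a w * -logb 2 (QY w a.2)

end Channel

section Caratheodory

variable {ι V : Type*} [Fintype ι] [AddCommGroup V] [Module ℝ V]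

lemma exists_nonneg_add_mul_eq_zero (μ ν : ι → ℝ) (hμ : ∀ i, 0 ≤ μ i) (hν : ∃ i, ν i < 0) :
    ∃ t, 0 ≤ t ∧ (∀ i, 0 ≤ μ i + t * ν i) ∧ ∃ i, ν i < 0 ∧ μ i + t * ν i = 0 := by
  obtain ⟨i, hi⟩ := hν
  obtain ⟨i₀, hi₀, hmin⟩ := Finset.exists_min_image {i | ν i < 0} (fun i => μ i / -ν i)
    ⟨i, by simpa using hi⟩
  simp only [Finset.mem_filter, Finset.mem_univ, true_and] at hi₀ hmin
  refine ⟨μ i₀ / -ν i₀, div_nonneg (hμ i₀) (by linarith), fun i => ?_, i₀, hi₀, ?_⟩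
  · rcases le_or_gt 0 (ν i) with h | h
    · exact add_nonneg (hμ i) (mul_nonneg (div_nonneg (hμ i₀) (by linarith)) h)
    · have := hmin i h
      rw [le_div_iff₀ (by linarith)] at this
      nlinarith
  · field_simp [hi₀.ne]
    ring

lemma exists_descent_direction [FiniteDimensional ℝ V] (v : ι → V) (ℓ : V →ₗ[ℝ] ℝ)
    (c μ : ι → ℝ) (hℓ : ∀ i, μ i ≠ 0 → ℓ (v i) = 1)
    (hcard : Module.finrank ℝ V < #{i | μ i ≠ 0}) :
    ∃ ν : ι → ℝ, (∀ i, μ i = 0 → ν i = 0) ∧ ∑ i, ν i • v i = 0 ∧ 0 ≤ ∑ i, ν i * c i ∧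
      ∃ i, ν i < 0 := by
  have hdep : ¬ LinearIndependent ℝ fun i : {i // μ i ≠ 0} => v i := fun hli => by
    have := hli.fintype_card_le_finrank
    rw [Fintype.card_subtype] at this
    omega
  obtain ⟨g, hg, i₀, hi₀⟩ := Fintype.not_linearIndependent_iff.1 hdep
  set ν : ι → ℝ := fun i => if h : μ i ≠ 0 then g ⟨i, h⟩ else 0
  have hsupp : ∀ i, μ i = 0 → ν i = 0 := fun i h => by simp [ν, h]
  have hν₁ : ∑ i, ν i • v i = 0 := by
    rw [← Fintype.sum_subtype_add_sum_subtype (fun i => μ i ≠ 0)]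
    have h1 : ∀ j : {i // μ i ≠ 0}, ν j • v j = g j • v j := fun j => by
      simp only [ν, dif_pos j.2]
    have h2 : ∀ j : {i // ¬ μ i ≠ 0}, ν j • v j = 0 := fun j => by
      simp only [ν, dif_neg j.2, zero_smul]
    simp only [h1, h2, Finset.sum_const_zero, add_zero, hg]
  have hν₂ : ∑ i, ν i = 0 := by
    have h : ∀ i, ν i = ν i * ℓ (v i) := fun i => by
      rcases eq_or_ne (μ i) 0 with h | h
      · simp [hsupp i h]
      · rw [hℓ i h, mul_one]
    rw [Finset.sum_congr rfl fun i _ => h i]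
    simpa [map_sum] using congrArg ℓ hν₁
  have hne : ν i₀ ≠ 0 := by simpa [ν, i₀.2] using hi₀
  have hneg : ∀ ν' : ι → ℝ, ∑ i, ν' i = 0 → ν' i₀ ≠ 0 → ∃ i, ν' i < 0 := fun ν' hs h0 => by
    by_contra! hpos
    exact h0 ((Finset.sum_eq_zero_iff_of_nonneg fun i _ => hpos i).1 hs i₀ (Finset.mem_univ _))
  rcases le_total 0 (∑ i, ν i * c i) with hc | hc
  · exact ⟨ν, hsupp, hν₁, hc, hneg ν hν₂ hne⟩
  · refine ⟨-ν, fun i h => by simp [hsupp i h], by simp [neg_smul, hν₁], by simpa using hc,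
      hneg (-ν) (by simp [hν₂]) (by simpa using hne)⟩

theorem exists_nonneg_card_support_le_finrank [FiniteDimensional ℝ V] (v : ι → V)
    (ℓ : V →ₗ[ℝ] ℝ) (c μ : ι → ℝ) (hμ : ∀ i, 0 ≤ μ i) (hℓ : ∀ i, μ i ≠ 0 → ℓ (v i) = 1) :
    ∃ μ' : ι → ℝ, (∀ i, 0 ≤ μ' i) ∧ (∀ i, μ' i ≠ 0 → μ i ≠ 0) ∧
      #{i | μ' i ≠ 0} ≤ Module.finrank ℝ V ∧ ∑ i, μ' i • v i = ∑ i, μ i • v i ∧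
      ∑ i, μ i * c i ≤ ∑ i, μ' i * c i := by
  induction hn : #{i | μ i ≠ 0} using Nat.strong_induction_on generalizing μ with
  | _ n ih =>
  by_cases hsmall : n ≤ Module.finrank ℝ V
  · exact ⟨μ, hμ, fun _ h => h, hn ▸ hsmall, rfl, le_rfl⟩
  obtain ⟨ν, hνsupp, hνv, hνc, hneg⟩ :=
    exists_descent_direction v ℓ c μ hℓ (by omega)
  obtain ⟨t, ht, hμ₂, i₁, hi₁, hzero⟩ := exists_nonneg_add_mul_eq_zero μ ν hμ hneg
  have hsupp : ∀ i, μ i + t * ν i ≠ 0 → μ i ≠ 0 := fun i h hμi => h (by simp [hμi, hνsupp i hμi])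
  have hlt : #{i | μ i + t * ν i ≠ 0} < n := hn ▸ Finset.card_lt_card
    ⟨fun i => by simpa using hsupp i, fun hsub =>
      (Finset.mem_filter.1 (hsub (Finset.mem_filter.2
        ⟨Finset.mem_univ _, fun h => hi₁.ne (hνsupp i₁ h)⟩))).2 hzero⟩
  obtain ⟨μ', hμ'0, hμ'supp, hcard, hμ'v, hμ'c⟩ :=
    ih _ hlt _ hμ₂ (fun i h => hℓ i (hsupp i h)) rfl
  refine ⟨μ', hμ'0, fun i h => hsupp i (hμ'supp i h), hcard, ?_, ?_⟩
  · simp [hμ'v, add_smul, Finset.sum_add_distrib, mul_smul, ← Finset.smul_sum, hνv]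
  · refine le_trans ?_ hμ'c
    simp only [add_mul, Finset.sum_add_distrib, mul_assoc, ← Finset.mul_sum]
    nlinarith

end Caratheodory

section Mixture

structure IsMixture {ι α : Type*} [Fintype ι] [Fintype α] (p : α → ℝ) (μ : ι → ℝ)
    (q : ι → α → ℝ) : Prop where
  nonneg : ∀ i, 0 ≤ μ i
  isProb : ∀ i, μ i ≠ 0 → IsProb (q i)
  sum_mul : ∀ a, ∑ i, μ i * q i a = p a

def fstMarg {𝒳 𝒴 : Type*} [Fintype 𝒴] (q : 𝒳 × 𝒴 → ℝ) (x : 𝒳) : ℝ := ∑ y, q (x, y)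

def sndMarg {𝒳 𝒴 : Type*} [Fintype 𝒳] (q : 𝒳 × 𝒴 → ℝ) (y : 𝒴) : ℝ := ∑ x, q (x, y)

variable {ι α : Type*} [Fintype ι] [Fintype α] {p : α → ℝ} {μ : ι → ℝ} {q : ι → α → ℝ}

lemma IsMixture.sum_weights (hp : IsProb p) (h : IsMixture p μ q) : ∑ i, μ i = 1 := by
  rw [← hp.2, ← Finset.sum_congr rfl fun a _ => h.sum_mul a, Finset.sum_comm]
  refine Finset.sum_congr rfl fun i _ => ?_
  rcases eq_or_ne (μ i) 0 with h0 | h0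
  · simp [h0]
  · rw [← Finset.mul_sum, (h.isProb i h0).2, mul_one]

lemma IsMixture.exists_channel_mul_eq (hp : IsProb p) (h : IsMixture p μ q) :
    ∃ K : α → ι → ℝ, IsChannel K ∧ ∀ a i, p a * K a i = μ i * q i a := by
  have hμq : ∀ i a, 0 ≤ μ i * q i a := fun i a => by
    rcases eq_or_ne (μ i) 0 with h0 | h0
    · simp [h0]
    · exact mul_nonneg (h.nonneg i) ((h.isProb i h0).1 a)
  refine ⟨fun a i => if p a = 0 then μ i else μ i * q i a / p a, fun a => ?_, fun a i => ?_⟩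
  · by_cases ha : p a = 0
    · simpa [ha] using ⟨h.nonneg, h.sum_weights hp⟩
    · simp only [ha, if_false]
      refine ⟨fun i => div_nonneg (hμq i a) (hp.1 a), ?_⟩
      rw [← Finset.sum_div, h.sum_mul, div_self ha]
  · by_cases ha : p a = 0
    · have := Finset.single_le_sum (fun j _ => hμq j a) (Finset.mem_univ i)
      rw [h.sum_mul, ha] at this
      simp [ha, le_antisymm this (hμq i a)]
    · simp [ha, mul_div_cancel₀ _ ha]

lemma IsMixture.sumElim {κ : Type*} [Fintype κ] {ν : κ → ℝ} {r : κ → α → ℝ}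
    (h₁ : IsMixture p μ q) (h₂ : IsMixture p ν r) {a b : ℝ} (ha : 0 ≤ a) (hb : 0 ≤ b)
    (hab : a + b = 1) : IsMixture p (Sum.elim (a • μ) (b • ν)) (Sum.elim q r) where
  nonneg := by
    rintro (i | i)
    · exact mul_nonneg ha (h₁.nonneg i)
    · exact mul_nonneg hb (h₂.nonneg i)
  isProb := by
    rintro (i | i) h
    · exact h₁.isProb i (right_ne_zero_of_mul h)
    · exact h₂.isProb i (right_ne_zero_of_mul h)
  sum_mul c := by
    simp only [Fintype.sum_sum_type, Sum.elim_inl, Sum.elim_inr, Pi.smul_apply, smul_eq_mul,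
      mul_assoc, ← Finset.mul_sum, h₁.sum_mul, h₂.sum_mul, ← add_mul, hab, one_mul]

omit [Fintype α] in
lemma IsProb.fstMarg {𝒳 𝒴 : Type*} [Fintype 𝒳] [Fintype 𝒴] {q : 𝒳 × 𝒴 → ℝ} (hq : IsProb q) :
    IsProb (fstMarg q) :=
  ⟨fun _ => Finset.sum_nonneg fun _ _ => hq.1 _, by rw [← hq.2, Fintype.sum_prod_type]; rfl⟩

omit [Fintype α] in
lemma IsProb.sndMarg {𝒳 𝒴 : Type*} [Fintype 𝒳] [Fintype 𝒴] {q : 𝒳 × 𝒴 → ℝ} (hq : IsProb q) :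
    IsProb (sndMarg q) :=
  ⟨fun _ => Finset.sum_nonneg fun _ _ => hq.1 _, by
    rw [← hq.2, Fintype.sum_prod_type_right]; rfl⟩

end Mixture

section ChannelMixture

variable {𝒳 𝒴 𝒲 : Type*} [Fintype 𝒳] [Fintype 𝒴] [Fintype 𝒲]
  {p : 𝒳 × 𝒴 → ℝ} {K : 𝒳 × 𝒴 → 𝒲 → ℝ} {μ : 𝒲 → ℝ} {q : 𝒲 → 𝒳 × 𝒴 → ℝ}

omit [Fintype 𝒲] in
lemma outW_eq_of_mul_eq (hq : ∀ w, μ w ≠ 0 → IsProb (q w))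
    (hμq : ∀ a w, p a * K a w = μ w * q w a) : outW p K = μ := by
  funext w
  simp only [outW, hμq, ← Finset.mul_sum]
  rcases eq_or_ne (μ w) 0 with h | h
  · simp [h]
  · rw [(hq w h).2, mul_one]

variable (hμ : ∀ w, 0 ≤ μ w) (hq : ∀ w, μ w ≠ 0 → IsProb (q w))
  (hμq : ∀ a w, p a * K a w = μ w * q w a)
include hμ hq hμq

theorem mutInfoW_eq_of_mul_eq : mutInfoW p K = ent p - ∑ w, μ w * ent (q w) := by
  have hJ : jointW p K = fun z => μ z.1 * q z.1 z.2 := funext fun z => hμq z.2 z.1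
  rw [mutInfoW, hJ, ent_mul μ q hμ hq, outW_eq_of_mul_eq hq hμq]
  ring

theorem condEntX_eq_of_mul_eq : condEntX p K = ∑ w, μ w * ent (fstMarg (q w)) := by
  have hm : margWX p K = fun z => μ z.1 * fstMarg (q z.1) z.2 :=
    funext fun z => by simp only [margWX, hμq, fstMarg, Finset.mul_sum]
  rw [condEntX, hm, ent_mul μ _ hμ fun w h => (hq w h).fstMarg, outW_eq_of_mul_eq hq hμq]
  ring

theorem condEntY_eq_of_mul_eq : condEntY p K = ∑ w, μ w * ent (sndMarg (q w)) := by
  have hm : margWY p K = fun z => μ z.1 * sndMarg (q z.1) z.2 :=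
    funext fun z => by simp only [margWY, hμq, sndMarg, Finset.mul_sum]
  rw [condEntY, hm, ent_mul μ _ hμ fun w h => (hq w h).sndMarg, outW_eq_of_mul_eq hq hμq]
  ring

end ChannelMixture

section CondDist

variable {𝒳 𝒴 𝒲 : Type*} [Fintype 𝒳] [Fintype 𝒴] [Fintype 𝒲]
  {p : 𝒳 × 𝒴 → ℝ} {K : 𝒳 × 𝒴 → 𝒲 → ℝ}

noncomputable def condDist (p : 𝒳 × 𝒴 → ℝ) (K : 𝒳 × 𝒴 → 𝒲 → ℝ) (w : 𝒲) (a : 𝒳 × 𝒴) : ℝ :=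
  p a * K a w / outW p K w

variable (hp : IsProb p) (hK : IsChannel K)
include hp hK

lemma mul_eq_outW_mul_condDist (a : 𝒳 × 𝒴) (w : 𝒲) :
    p a * K a w = outW p K w * condDist p K w a := by
  rcases eq_or_ne (outW p K w) 0 with h | h
  · rw [h, zero_mul]
    exact le_antisymm (h ▸ mul_le_outW hp hK a w) (mul_nonneg_of_isChannel hp hK a w)
  · rw [condDist, mul_div_cancel₀ _ h]

lemma isMixture_condDist : IsMixture p (outW p K) (condDist p K) where
  nonneg := outW_nonneg hp hK
  isProb w h := ⟨fun a => div_nonneg (mul_nonneg_of_isChannel hp hK a w) (outW_nonneg hp hK w),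
    by simp only [condDist, ← Finset.sum_div]; exact div_self h⟩
  sum_mul a := by
    simp only [← mul_eq_outW_mul_condDist hp hK, ← Finset.mul_sum, (hK a).2, mul_one]

theorem condEntX_nonneg : 0 ≤ condEntX p K := by
  have h := isMixture_condDist hp hK
  rw [condEntX_eq_of_mul_eq h.nonneg h.isProb (mul_eq_outW_mul_condDist hp hK)]
  refine Finset.sum_nonneg fun w _ => ?_
  rcases eq_or_ne (outW p K w) 0 with h0 | h0
  · simp [h0]
  · exact mul_nonneg (h.nonneg w) (h.isProb w h0).fstMarg.ent_nonneg

theorem condEntY_nonneg : 0 ≤ condEntY p K := by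
  have h := isMixture_condDist hp hK
  rw [condEntY_eq_of_mul_eq h.nonneg h.isProb (mul_eq_outW_mul_condDist hp hK)]
  refine Finset.sum_nonneg fun w _ => ?_
  rcases eq_or_ne (outW p K w) 0 with h0 | h0
  · simp [h0]
  · exact mul_nonneg (h.nonneg w) (h.isProb w h0).sndMarg.ent_nonneg

end CondDist

section Rgw

variable {𝒳 𝒴 : Type*} [Fintype 𝒳] [Fintype 𝒴] {p : 𝒳 × 𝒴 → ℝ} {r1 r2 : ℝ}

def rateSet (p : 𝒳 × 𝒴 → ℝ) (r1 r2 : ℝ) : Set ℝ :=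
  { ρ : ℝ | ∃ k, k ≤ Fintype.card 𝒳 * Fintype.card 𝒴 + 2 ∧
    ∃ K : 𝒳 × 𝒴 → Fin k → ℝ, IsChannel K ∧
      condEntX p K ≤ r1 ∧ condEntY p K ≤ r2 ∧ ρ = mutInfoW p K }

lemma Rgw_eq_sInf_rateSet : Rgw p r1 r2 = sInf (rateSet p r1 r2) := rfl

lemma bddBelow_rateSet (hp : IsProb p) : BddBelow (rateSet p r1 r2) :=
  ⟨0, by rintro _ ⟨k, -, K, hK, -, -, rfl⟩; exact mutInfoW_nonneg hp hK⟩

lemma Rgw_le_mutInfoW (hp : IsProb p) {k : ℕ} (hk : k ≤ Fintype.card 𝒳 * Fintype.card 𝒴 + 2)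
    {K : 𝒳 × 𝒴 → Fin k → ℝ} (hK : IsChannel K) (h1 : condEntX p K ≤ r1)
    (h2 : condEntY p K ≤ r2) : Rgw p r1 r2 ≤ mutInfoW p K :=
  csInf_le (bddBelow_rateSet hp) ⟨k, hk, K, hK, h1, h2, rfl⟩

lemma Rgw_anti (hp : IsProb p) {r1' r2' : ℝ} (h1 : r1 ≤ r1') (h2 : r2 ≤ r2')
    (hne : (rateSet p r1 r2).Nonempty) : Rgw p r1' r2' ≤ Rgw p r1 r2 :=
  csInf_le_csInf (bddBelow_rateSet hp) hne fun _ ⟨k, hk, K, hK, hX, hY, hρ⟩ =>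
    ⟨k, hk, K, hK, hX.trans h1, hY.trans h2, hρ⟩

variable {ι : Type*} [Fintype ι] {μ : ι → ℝ} {q : ι → 𝒳 × 𝒴 → ℝ}

/-- The bound `|𝒳||𝒴| + 2` is the dimension of the space of the vectors
`(q i, H(fstMarg (q i)), H(sndMarg (q i)))`. -/
theorem IsMixture.exists_card_support_le (h : IsMixture p μ q) :
    ∃ μ' : ι → ℝ, IsMixture p μ' q ∧ #{i | μ' i ≠ 0} ≤ Fintype.card 𝒳 * Fintype.card 𝒴 + 2 ∧
      ∑ i, μ' i * ent (fstMarg (q i)) = ∑ i, μ i * ent (fstMarg (q i)) ∧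
      ∑ i, μ' i * ent (sndMarg (q i)) = ∑ i, μ i * ent (sndMarg (q i)) ∧
      ∑ i, μ i * ent (q i) ≤ ∑ i, μ' i * ent (q i) := by
  let v : ι → (𝒳 × 𝒴 → ℝ) × ℝ × ℝ := fun i => (q i, ent (fstMarg (q i)), ent (sndMarg (q i)))
  let ℓ : ((𝒳 × 𝒴 → ℝ) × ℝ × ℝ) →ₗ[ℝ] ℝ :=
    (∑ a, LinearMap.proj a) ∘ₗ LinearMap.fst ℝ (𝒳 × 𝒴 → ℝ) (ℝ × ℝ)
  obtain ⟨μ', hμ'0, hsupp, hcard, hv, hc⟩ := exists_nonneg_card_support_le_finrank v ℓ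
    (fun i => ent (q i)) μ h.nonneg fun i hi => by simpa [ℓ, v] using (h.isProb i hi).2
  have hfin : Module.finrank ℝ ((𝒳 × 𝒴 → ℝ) × ℝ × ℝ) = Fintype.card 𝒳 * Fintype.card 𝒴 + 2 := by
    simp [Module.finrank_prod, Module.finrank_fintype_fun_eq_card]
  refine ⟨μ', ⟨hμ'0, fun i hi => h.isProb i (hsupp i hi), fun a => ?_⟩, hfin ▸ hcard, ?_, ?_, hc⟩
  · simpa [v, Prod.fst_sum, Finset.sum_apply, h.sum_mul] using congrArg (fun z => z.1 a) hv
  · simpa [v, Prod.snd_sum, Prod.fst_sum] using congrArg (fun z => z.2.1) hv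
  · simpa [v, Prod.snd_sum] using congrArg (fun z => z.2.2) hv

lemma sum_mul_subtype_ne_zero (G : ι → ℝ) :
    ∑ j : {i // μ i ≠ 0}, μ j * G j = ∑ i, μ i * G i := by
  rw [← Fintype.sum_subtype_add_sum_subtype (fun i => μ i ≠ 0) fun i => μ i * G i,
    Finset.sum_eq_zero (s := Finset.univ) fun (j : {i // ¬μ i ≠ 0}) _ => by
      rw [not_not.1 j.2, zero_mul], add_zero]

theorem IsMixture.exists_mem_rateSet (hp : IsProb p) (h : IsMixture p μ q)
    (h1 : ∑ i, μ i * ent (fstMarg (q i)) ≤ r1) (h2 : ∑ i, μ i * ent (sndMarg (q i)) ≤ r2) :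
    ∃ ρ ∈ rateSet p r1 r2, ρ ≤ ent p - ∑ i, μ i * ent (q i) := by
  obtain ⟨μ', hμ', hcard, hX, hY, hI⟩ := h.exists_card_support_le
  let e : Fin #{i | μ' i ≠ 0} ≃ {i // μ' i ≠ 0} :=
    (Fintype.equivFinOfCardEq (Fintype.card_subtype _)).symm
  have hsum : ∀ G : ι → ℝ, ∑ j, μ' (e j) * G (e j) = ∑ i, μ' i * G i := fun G =>
    (e.sum_comp fun j => μ' j * G j).trans (sum_mul_subtype_ne_zero G)
  have hmix : IsMixture p (fun j => μ' (e j)) (fun j => q (e j)) :=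
    ⟨fun _ => hμ'.nonneg _, fun _ h => hμ'.isProb _ h,
      fun a => (hsum fun i => q i a).trans (hμ'.sum_mul a)⟩
  obtain ⟨K, hK, hμq⟩ := hmix.exists_channel_mul_eq hp
  refine ⟨_, ⟨_, hcard, K, hK, ?_, ?_, rfl⟩, ?_⟩
  · rwa [condEntX_eq_of_mul_eq hmix.nonneg hmix.isProb hμq, hsum fun i => ent (fstMarg (q i)), hX]
  · rwa [condEntY_eq_of_mul_eq hmix.nonneg hmix.isProb hμq, hsum fun i => ent (sndMarg (q i)), hY]
  · rw [mutInfoW_eq_of_mul_eq hmix.nonneg hmix.isProb hμq, hsum fun i => ent (q i)]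
    linarith

theorem Rgw_le_of_isMixture (hp : IsProb p) (h : IsMixture p μ q)
    (h1 : ∑ i, μ i * ent (fstMarg (q i)) ≤ r1) (h2 : ∑ i, μ i * ent (sndMarg (q i)) ≤ r2) :
    Rgw p r1 r2 ≤ ent p - ∑ i, μ i * ent (q i) := by
  obtain ⟨ρ, hρ, hle⟩ := h.exists_mem_rateSet hp h1 h2
  exact (csInf_le (bddBelow_rateSet hp) hρ).trans hle

lemma rateSet_nonempty (hp : IsProb p) (h1 : 0 ≤ r1) (h2 : 0 ≤ r2) :
    (rateSet p r1 r2).Nonempty := by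
  have hmix : IsMixture p p fun b => Pi.single b 1 :=
    ⟨hp.1, fun b _ => ⟨fun a => by by_cases h : a = b <;> simp [h], by simp⟩,
      fun a => by simp [Pi.single_apply]⟩
  have hX : ∀ b : 𝒳 × 𝒴, fstMarg (Pi.single b (1 : ℝ)) = Pi.single b.1 1 := fun b => by
    funext x
    by_cases h : x = b.1
    · subst h; simp [fstMarg, Pi.single_apply, Prod.ext_iff]
    · simp [fstMarg, Prod.ext_iff, h]
  have hY : ∀ b : 𝒳 × 𝒴, sndMarg (Pi.single b (1 : ℝ)) = Pi.single b.2 1 := fun b => by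
    funext y
    by_cases h : y = b.2
    · subst h; simp [sndMarg, Pi.single_apply, Prod.ext_iff]
    · simp [sndMarg, Prod.ext_iff, h]
  obtain ⟨ρ, hρ, -⟩ := hmix.exists_mem_rateSet hp (r1 := r1) (r2 := r2)
    (by simpa [hX, ent_single] using h1) (by simpa [hY, ent_single] using h2)
  exact ⟨ρ, hρ⟩

theorem Rgw_le_timeSharing (hp : IsProb p) {𝒲₁ 𝒲₂ : Type*} [Fintype 𝒲₁] [Fintype 𝒲₂]
    {K₁ : 𝒳 × 𝒴 → 𝒲₁ → ℝ} {K₂ : 𝒳 × 𝒴 → 𝒲₂ → ℝ} (hK₁ : IsChannel K₁) (hK₂ : IsChannel K₂)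
    {a b : ℝ} (ha : 0 ≤ a) (hb : 0 ≤ b) (hab : a + b = 1)
    (h1 : a * condEntX p K₁ + b * condEntX p K₂ ≤ r1)
    (h2 : a * condEntY p K₁ + b * condEntY p K₂ ≤ r2) :
    Rgw p r1 r2 ≤ a * mutInfoW p K₁ + b * mutInfoW p K₂ := by
  have m₁ := isMixture_condDist hp hK₁
  have m₂ := isMixture_condDist hp hK₂
  have e₁ := mul_eq_outW_mul_condDist hp hK₁
  have e₂ := mul_eq_outW_mul_condDist hp hK₂
  have hsum : ∀ F : (𝒳 × 𝒴 → ℝ) → ℝ,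
      ∑ i, Sum.elim (a • outW p K₁) (b • outW p K₂) i
          * F (Sum.elim (condDist p K₁) (condDist p K₂) i)
        = a * ∑ w, outW p K₁ w * F (condDist p K₁ w)
          + b * ∑ w, outW p K₂ w * F (condDist p K₂ w) := fun F => by
    simp [Fintype.sum_sum_type, Finset.mul_sum, mul_assoc]
  rw [condEntX_eq_of_mul_eq m₁.nonneg m₁.isProb e₁, condEntX_eq_of_mul_eq m₂.nonneg m₂.isProb e₂,
    ← hsum fun q => ent (fstMarg q)] at h1
  rw [condEntY_eq_of_mul_eq m₁.nonneg m₁.isProb e₁, condEntY_eq_of_mul_eq m₂.nonneg m₂.isProb e₂,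
    ← hsum fun q => ent (sndMarg q)] at h2
  refine (Rgw_le_of_isMixture hp (m₁.sumElim m₂ ha hb hab) h1 h2).trans_eq ?_
  rw [hsum ent, mutInfoW_eq_of_mul_eq m₁.nonneg m₁.isProb e₁,
    mutInfoW_eq_of_mul_eq m₂.nonneg m₂.isProb e₂]
  linear_combination (-ent p) * hab

theorem convexOn_Rgw (hp : IsProb p) :
    ConvexOn ℝ (Set.Ici 0 ×ˢ Set.Ici 0) fun r : ℝ × ℝ => Rgw p r.1 r.2 := by
  refine ⟨(convex_Ici 0).prod (convex_Ici 0), fun u hu v hv a b ha hb hab => ?_⟩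
  simp only [Prod.fst_add, Prod.snd_add, Prod.smul_fst, Prod.smul_snd, smul_eq_mul]
  refine le_of_forall_pos_le_add fun ε hε => ?_
  obtain ⟨_, ⟨k₁, -, K₁, hK₁, hX₁, hY₁, rfl⟩, hlt₁⟩ :=
    Real.lt_sInf_add_pos (rateSet_nonempty hp hu.1 hu.2) hε
  obtain ⟨_, ⟨k₂, -, K₂, hK₂, hX₂, hY₂, rfl⟩, hlt₂⟩ :=
    Real.lt_sInf_add_pos (rateSet_nonempty hp hv.1 hv.2) hε
  rw [← Rgw_eq_sInf_rateSet] at hlt₁ hlt₂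
  calc Rgw p (a * u.1 + b * v.1) (a * u.2 + b * v.2)
      ≤ a * mutInfoW p K₁ + b * mutInfoW p K₂ :=
        Rgw_le_timeSharing hp hK₁ hK₂ ha hb hab (by gcongr) (by gcongr)
    _ ≤ a * (Rgw p u.1 u.2 + ε) + b * (Rgw p v.1 v.2 + ε) := by gcongr
    _ = a * Rgw p u.1 u.2 + b * Rgw p v.1 v.2 + ε := by linear_combination ε * hab

end Rgw

section Calculus

open Filter Topology

theorem HasDerivAt.eq_zero_of_forall_Icc_eq {f : ℝ → ℝ} {f' a b : ℝ} (hf : HasDerivAt f f' b)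
    (hab : a < b) (hc : ∀ y ∈ Set.Icc a b, f y = f b) : f' = 0 :=
  (uniqueDiffOn_Icc hab b ⟨hab.le, le_rfl⟩).eq_deriv _ hf.hasDerivWithinAt
    ((hasDerivWithinAt_const b _ (f b)).congr hc rfl)

theorem HasDerivAt.le_of_eventually_mul_le {g : ℝ → ℝ} {g' c : ℝ} (hg : HasDerivAt g g' 0)
    (h : ∀ᶠ t in 𝓝[>] 0, t * c ≤ g t - g 0) : c ≤ g' := by
  refine ge_of_tendsto hg.tendsto_slope_zero_right ?_
  filter_upwards [h, self_mem_nhdsWithin] with t ht ht0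
  rwa [zero_add, smul_eq_mul, le_inv_mul_iff₀ ht0]

lemma ConvexOn.mul_sub_le_axes {s : Set (ℝ × ℝ)} {f : ℝ × ℝ → ℝ} (hf : ConvexOn ℝ s f)
    {x y : ℝ × ℝ} (hx : x ∈ s) (hy : y ∈ s) {t : ℝ} (ht0 : 0 ≤ t) (ht1 : t ≤ 1)
    (hm : x - t • (y - x) ∈ s) (hm₁ : (x.1 - 2 * t * (y - x).1, x.2) ∈ s)
    (hm₂ : (x.1, x.2 - 2 * t * (y - x).2) ∈ s) :
    t * (f x - f y)
      ≤ (f (x.1 - 2 * t * (y - x).1, x.2) + f (x.1, x.2 - 2 * t * (y - x).2)) / 2 - f x := by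
  have hmid : ∀ u ∈ s, ∀ v ∈ s, f ((1 / 2 : ℝ) • u + (1 / 2 : ℝ) • v) ≤ (f u + f v) / 2 :=
    fun u hu v hv => (hf.2 hu hv (by norm_num) (by norm_num) (by norm_num)).trans_eq
      (by simp only [smul_eq_mul]; ring)
  have hA := hf.2 hx hy (sub_nonneg.2 ht1) ht0 (sub_add_cancel 1 t)
  have hB := hmid _ (hf.1 hx hy (sub_nonneg.2 ht1) ht0 (sub_add_cancel 1 t)) _ hm
  have hC := hmid _ hm₁ _ hm₂
  rw [show (1 / 2 : ℝ) • ((1 - t) • x + t • y) + (1 / 2 : ℝ) • (x - t • (y - x)) = x by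
    ext <;> simp <;> ring] at hB
  rw [show (1 / 2 : ℝ) • (x.1 - 2 * t * (y - x).1, x.2)
      + (1 / 2 : ℝ) • (x.1, x.2 - 2 * t * (y - x).2) = x - t • (y - x) by
    ext <;> simp <;> ring] at hC
  simp only [smul_eq_mul] at hA
  nlinarith

theorem ConvexOn.add_partial_derivs_le {s : Set (ℝ × ℝ)} {f : ℝ × ℝ → ℝ}
    (hf : ConvexOn ℝ s f) {x : ℝ × ℝ} (hx : x ∈ interior s) {f₁ f₂ : ℝ}
    (h₁ : HasDerivAt (fun u => f (u, x.2)) f₁ x.1) (h₂ : HasDerivAt (fun u => f (x.1, u)) f₂ x.2)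
    {y : ℝ × ℝ} (hy : y ∈ s) : f x + f₁ * (y.1 - x.1) + f₂ * (y.2 - x.2) ≤ f y := by
  set d := y - x
  let g : ℝ → ℝ := fun t => (f (x.1 - 2 * t * d.1, x.2) + f (x.1, x.2 - 2 * t * d.2)) / 2
  have hg : HasDerivAt g (-(f₁ * d.1 + f₂ * d.2)) 0 := by
    have k₁ := HasDerivAt.comp_of_eq 0 h₁
      ((((hasDerivAt_id' (0 : ℝ)).const_mul 2).mul_const d.1).const_sub x.1) (by simp)
    have k₂ := HasDerivAt.comp_of_eq 0 h₂
      ((((hasDerivAt_id' (0 : ℝ)).const_mul 2).mul_const d.2).const_sub x.2) (by simp)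
    exact ((k₁.add k₂).div_const 2).congr_deriv (by ring)
  have hcurve : ∀ c : ℝ → ℝ × ℝ, Continuous c → c 0 = x → ∀ᶠ t in 𝓝[>] 0, c t ∈ s :=
    fun c hc h0 => ((hc.tendsto' 0 x h0).eventually
      (mem_interior_iff_mem_nhds.1 hx)).filter_mono nhdsWithin_le_nhds
  have := hg.le_of_eventually_mul_le (c := f x - f y) ?_
  · simp only [d, Prod.fst_sub, Prod.snd_sub] at this
    linarith
  filter_upwards [self_mem_nhdsWithin, nhdsWithin_le_nhds (eventually_lt_nhds one_pos),
    hcurve (fun t => x - t • d) (by fun_prop) (by simp),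
    hcurve (fun t => (x.1 - 2 * t * d.1, x.2)) (by fun_prop) (by simp),
    hcurve (fun t => (x.1, x.2 - 2 * t * d.2)) (by fun_prop) (by simp)]
    with t (ht0 : 0 < t) ht1 hm hm₁ hm₂
  simpa [g, d] using hf.mul_sub_le_axes (interior_subset hx) hy ht0.le ht1.le hm hm₁ hm₂

end Calculus

section Tilted

variable {𝒳 𝒴 𝒲 : Type*} [Fintype 𝒲]
  {r1 r2 lam1 lam2 : ℝ} {QW : 𝒲 → ℝ} {QX : 𝒲 → 𝒳 → ℝ} {QY : 𝒲 → 𝒴 → ℝ}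

noncomputable def ffunDensity (r1 r2 lam1 lam2 : ℝ) (K : 𝒳 × 𝒴 → 𝒲 → ℝ) (QW : 𝒲 → ℝ)
    (QX : 𝒲 → 𝒳 → ℝ) (QY : 𝒲 → 𝒴 → ℝ) (a : 𝒳 × 𝒴) (w : 𝒲) : ℝ :=
  logb 2 (K a w / QW w) + lam1 * (-logb 2 (QX w a.1) - r1) + lam2 * (-logb 2 (QY w a.2) - r2)

lemma Ffun_eq_sum_ffunDensity [Fintype 𝒳] [Fintype 𝒴] (p : 𝒳 × 𝒴 → ℝ) (K : 𝒳 × 𝒴 → 𝒲 → ℝ) :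
    Ffun p r1 r2 lam1 lam2 K QW QX QY
      = ∑ a, p a * ∑ w, K a w * ffunDensity r1 r2 lam1 lam2 K QW QX QY a w := by
  simp only [Ffun, ffunDensity, Finset.mul_sum, ← Finset.sum_add_distrib]
  exact Finset.sum_congr rfl fun a _ => Finset.sum_congr rfl fun w _ => by ring

lemma Kstar_eq_rpow_Lam_mul (a : 𝒳 × 𝒴) (w : 𝒲) :
    Kstar r1 r2 lam1 lam2 QW QX QY a w = 2 ^ Lam r1 r2 lam1 lam2 QW QX QY a.1 a.2 *
      (QW w * if QX w a.1 = 0 ∨ QY w a.2 = 0 then 0 else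
        (2 : ℝ) ^ (lam1 * (r1 + logb 2 (QX w a.1)) + lam2 * (r2 + logb 2 (QY w a.2)))) := by
  unfold Kstar
  split_ifs
  · simp
  · rw [add_assoc, rpow_add two_pos]
    ring

lemma Kstar_nonneg (hQW : ∀ w, 0 ≤ QW w) (a : 𝒳 × 𝒴) (w : 𝒲) :
    0 ≤ Kstar r1 r2 lam1 lam2 QW QX QY a w := by
  unfold Kstar
  split_ifs
  · exact le_rfl
  · exact mul_nonneg (hQW w) (rpow_nonneg zero_le_two _)

lemma Kstar_ne_zero {a : 𝒳 × 𝒴} {w : 𝒲} (hW : QW w ≠ 0) (hX : QX w a.1 ≠ 0)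
    (hY : QY w a.2 ≠ 0) : Kstar r1 r2 lam1 lam2 QW QX QY a w ≠ 0 := by
  simp only [Kstar, hX, hY, or_self, if_false]
  exact mul_ne_zero hW (rpow_pos_of_pos two_pos _).ne'

lemma ne_zero_of_Kstar_ne_zero {a : 𝒳 × 𝒴} {w : 𝒲}
    (h : Kstar r1 r2 lam1 lam2 QW QX QY a w ≠ 0) : QW w ≠ 0 ∧ QX w a.1 ≠ 0 ∧ QY w a.2 ≠ 0 := by
  unfold Kstar at h
  split_ifs at h with hQ
  · exact absurd rfl h
  · exact ⟨left_ne_zero_of_mul h, not_or.1 hQ⟩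

/-- `2 ^ Λ` is the reciprocal of the partition sum over `w` in the definition of `Λ`. -/
lemma isProb_Kstar (hQW : ∀ w, 0 ≤ QW w) {a : 𝒳 × 𝒴} {w : 𝒲} (hW : QW w ≠ 0)
    (hX : QX w a.1 ≠ 0) (hY : QY w a.2 ≠ 0) : IsProb (Kstar r1 r2 lam1 lam2 QW QX QY a) := by
  refine ⟨Kstar_nonneg hQW a, ?_⟩
  simp only [Kstar_eq_rpow_Lam_mul, ← Finset.mul_sum]
  set Z := ∑ w, QW w * if QX w a.1 = 0 ∨ QY w a.2 = 0 then 0 else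
    (2 : ℝ) ^ (lam1 * (r1 + logb 2 (QX w a.1)) + lam2 * (r2 + logb 2 (QY w a.2)))
  have hZ : 0 < Z := by
    refine lt_of_lt_of_le ?_ (Finset.single_le_sum (fun v _ => mul_nonneg (hQW v) ?_)
      (Finset.mem_univ w))
    · simp only [hX, hY, or_self, if_false]
      exact mul_pos ((hQW w).lt_of_ne' hW) (rpow_pos_of_pos two_pos _)
    · split_ifs
      · exact le_rfl
      · exact rpow_nonneg zero_le_two _
  rw [show Lam r1 r2 lam1 lam2 QW QX QY a.1 a.2 = -logb 2 Z from rfl,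
    rpow_neg zero_le_two, rpow_logb two_pos one_lt_two.ne' hZ, inv_mul_cancel₀ hZ.ne']

lemma ffunDensity_eq_logb_div_Kstar_add_Lam {K : 𝒳 × 𝒴 → 𝒲 → ℝ} {a : 𝒳 × 𝒴} {w : 𝒲}
    (hK : K a w ≠ 0) (hW : QW w ≠ 0) (hX : QX w a.1 ≠ 0) (hY : QY w a.2 ≠ 0) :
    ffunDensity r1 r2 lam1 lam2 K QW QX QY a w
      = logb 2 (K a w / Kstar r1 r2 lam1 lam2 QW QX QY a w)
        + Lam r1 r2 lam1 lam2 QW QX QY a.1 a.2 := by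
  simp only [ffunDensity, Kstar, hX, hY, or_self, if_false]
  rw [logb_div hK (mul_ne_zero hW (rpow_pos_of_pos two_pos _).ne'),
    logb_mul hW (rpow_pos_of_pos two_pos _).ne', logb_rpow two_pos one_lt_two.ne',
    logb_div hK hW]
  ring

lemma sum_mul_ffunDensity_eq {K : 𝒳 × 𝒴 → 𝒲 → ℝ} {a : 𝒳 × 𝒴} (hK : ∑ w, K a w = 1)
    (hsupp : ∀ w, K a w ≠ 0 → QW w ≠ 0 ∧ QX w a.1 ≠ 0 ∧ QY w a.2 ≠ 0) :
    ∑ w, K a w * ffunDensity r1 r2 lam1 lam2 K QW QX QY a w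
      = ∑ w, K a w * logb 2 (K a w / Kstar r1 r2 lam1 lam2 QW QX QY a w)
        + Lam r1 r2 lam1 lam2 QW QX QY a.1 a.2 := by
  rw [← mul_one (Lam _ _ _ _ _ _ _ _ _), ← hK, Finset.mul_sum, ← Finset.sum_add_distrib]
  refine Finset.sum_congr rfl fun w _ => ?_
  rcases eq_or_ne (K a w) 0 with h | h
  · simp [h]
  · obtain ⟨hW, hX, hY⟩ := hsupp w h
    rw [ffunDensity_eq_logb_div_Kstar_add_Lam h hW hX hY]
    ring

end Tilted

section Lagrangian

variable {𝒳 𝒴 𝒲 : Type*} [Fintype 𝒳] [Fintype 𝒴] [Fintype 𝒲]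
  {p : 𝒳 × 𝒴 → ℝ} {K : 𝒳 × 𝒴 → 𝒲 → ℝ} {r1 r2 lam1 lam2 : ℝ}
  {QW : 𝒲 → ℝ} {QX : 𝒲 → 𝒳 → ℝ} {QY : 𝒲 → 𝒴 → ℝ}

lemma Ffun_eq (hp : IsProb p) (hK : IsChannel K) :
    Ffun p r1 r2 lam1 lam2 K QW QX QY
      = ∑ a, ∑ w, p a * K a w * logb 2 (K a w / QW w)
        + lam1 * (∑ a, ∑ w, p a * K a w * -logb 2 (QX w a.1) - r1)
        + lam2 * (∑ a, ∑ w, p a * K a w * -logb 2 (QY w a.2) - r2) := by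
  have h1 : ∑ a, ∑ w, p a * K a w = 1 := by
    simp only [← Finset.mul_sum, (hK _).2, mul_one, hp.2]
  simp only [Ffun, mul_sub, Finset.sum_sub_distrib, ← Finset.sum_mul, h1, one_mul]

theorem Ffun_self (hp : IsProb p) (hK : IsChannel K) :
    Ffun p r1 r2 lam1 lam2 K (outW p K) (condXW p K) (condYW p K)
      = mutInfoW p K + lam1 * (condEntX p K - r1) + lam2 * (condEntY p K - r2) := by
  rw [Ffun_eq hp hK, mutInfoW_eq_sum hp hK, condEntX_eq_sum hp hK, condEntY_eq_sum hp hK]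

theorem mutInfoW_add_mul_le_Ffun (hp : IsProb p) (hK : IsChannel K) (hl1 : 0 ≤ lam1)
    (hl2 : 0 ≤ lam2)
    (hQW0 : ∀ w, 0 ≤ QW w) (hQW1 : ∑ w, QW w ≤ 1)
    (hQX0 : ∀ w x, 0 ≤ QX w x) (hQX1 : ∀ w, ∑ x, QX w x ≤ 1)
    (hQY0 : ∀ w y, 0 ≤ QY w y) (hQY1 : ∀ w, ∑ y, QY w y ≤ 1)
    (hac : ∀ a w, p a * K a w ≠ 0 → QW w ≠ 0 ∧ QX w a.1 ≠ 0 ∧ QY w a.2 ≠ 0) :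
    mutInfoW p K + lam1 * (condEntX p K - r1) + lam2 * (condEntY p K - r2)
      ≤ Ffun p r1 r2 lam1 lam2 K QW QX QY := by
  have hI := mutInfoW_le_sum hp hK QW hQW0 hQW1 fun a w h => (hac a w h).1
  have hX := condEntX_le_sum hp hK QX hQX0 hQX1 fun a w h => (hac a w h).2.1
  have hY := condEntY_le_sum hp hK QY hQY0 hQY1 fun a w h => (hac a w h).2.2
  rw [Ffun_eq hp hK]
  linarith [mul_le_mul_of_nonneg_left hX hl1, mul_le_mul_of_nonneg_left hY hl2]

end Lagrangian

section Optimal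

variable {𝒳 𝒴 : Type*} [Fintype 𝒳] [Fintype 𝒴] {p : 𝒳 × 𝒴 → ℝ} {r1 r2 lam1 lam2 : ℝ}
  {k : ℕ} {K : 𝒳 × 𝒴 → Fin k → ℝ}

theorem IsOptChannel.condEntX_eq (hp : IsProb p) (hK : IsOptChannel p r1 r2 K)
    (hd : HasDerivAt (fun r => Rgw p r r2) (-lam1) r1) (hl : 0 < lam1) : condEntX p K = r1 := by
  obtain ⟨hk, hKc, h1, h2, hopt⟩ := hK
  by_contra hne
  refine hl.ne' (neg_eq_zero.1 (hd.eq_zero_of_forall_Icc_eq (h1.lt_of_ne hne) fun r hr => ?_))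
  exact le_antisymm (hopt ▸ Rgw_le_mutInfoW hp hk hKc hr.1 h2)
    (Rgw_anti hp hr.2 le_rfl ⟨_, k, hk, K, hKc, hr.1, h2, rfl⟩)

theorem IsOptChannel.condEntY_eq (hp : IsProb p) (hK : IsOptChannel p r1 r2 K)
    (hd : HasDerivAt (fun r => Rgw p r1 r) (-lam2) r2) (hl : 0 < lam2) : condEntY p K = r2 := by
  obtain ⟨hk, hKc, h1, h2, hopt⟩ := hK
  by_contra hne
  refine hl.ne' (neg_eq_zero.1 (hd.eq_zero_of_forall_Icc_eq (h2.lt_of_ne hne) fun r hr => ?_))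
  exact le_antisymm (hopt ▸ Rgw_le_mutInfoW hp hk hKc h1 hr.1)
    (Rgw_anti hp le_rfl hr.2 ⟨_, k, hk, K, hKc, h1, hr.1, rfl⟩)

theorem Rgw_le_sum_Lam (hp : IsProb p) (hr1 : 0 < r1) (hr2 : 0 < r2)
    (hd1 : HasDerivAt (fun r => Rgw p r r2) (-lam1) r1)
    (hd2 : HasDerivAt (fun r => Rgw p r1 r) (-lam2) r2) (hl1 : 0 ≤ lam1) (hl2 : 0 ≤ lam2)
    (hk : k ≤ Fintype.card 𝒳 * Fintype.card 𝒴 + 2) {QW : Fin k → ℝ} {QX : Fin k → 𝒳 → ℝ} {QY : Fin k → 𝒴 → ℝ}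
    (hQW0 : ∀ w, 0 ≤ QW w) (hQW1 : ∑ w, QW w ≤ 1)
    (hQX0 : ∀ w x, 0 ≤ QX w x) (hQX1 : ∀ w, ∑ x, QX w x ≤ 1)
    (hQY0 : ∀ w y, 0 ≤ QY w y) (hQY1 : ∀ w, ∑ y, QY w y ≤ 1)
    (hsupp : ∀ a, p a ≠ 0 → ∃ w, QW w ≠ 0 ∧ QX w a.1 ≠ 0 ∧ QY w a.2 ≠ 0) :
    Rgw p r1 r2 ≤ ∑ a, p a * Lam r1 r2 lam1 lam2 QW QX QY a.1 a.2 := by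
  set Ks := Kstar r1 r2 lam1 lam2 QW QX QY
  have hKsp : ∀ a, p a ≠ 0 → IsProb (Ks a) := fun a ha => by
    obtain ⟨w, hW, hX, hY⟩ := hsupp a ha
    exact isProb_Kstar hQW0 hW hX hY
  obtain ⟨a₀, -, ha₀⟩ := Finset.exists_ne_zero_of_sum_ne_zero (s := Finset.univ) (f := p)
    (by rw [hp.2]; exact one_ne_zero)
  let K' : 𝒳 × 𝒴 → Fin k → ℝ := fun a => if p a = 0 then Ks a₀ else Ks a
  have hKs : ∀ a, p a ≠ 0 → K' a = Ks a := fun a ha => if_neg ha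
  have hK' : IsChannel K' := fun a => by
    by_cases ha : p a = 0
    · simpa [K', ha] using hKsp a₀ ha₀
    · exact hKs a ha ▸ hKsp a ha
  have hac : ∀ a w, p a * K' a w ≠ 0 → QW w ≠ 0 ∧ QX w a.1 ≠ 0 ∧ QY w a.2 ≠ 0 := fun a w h =>
    ne_zero_of_Kstar_ne_zero (hKs a (left_ne_zero_of_mul h) ▸ right_ne_zero_of_mul h)
  have hF : Ffun p r1 r2 lam1 lam2 K' QW QX QY
      = ∑ a, p a * Lam r1 r2 lam1 lam2 QW QX QY a.1 a.2 := by
    rw [Ffun_eq_sum_ffunDensity]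
    refine Finset.sum_congr rfl fun a _ => ?_
    rcases eq_or_ne (p a) 0 with ha | ha
    · simp [ha]
    rw [sum_mul_ffunDensity_eq (hK' a).2 fun w h => hac a w (mul_ne_zero ha h), hKs a ha,
      Finset.sum_eq_zero fun w _ => ?_, zero_add]
    rcases eq_or_ne (Ks a w) 0 with h | h
    · simp [h]
    · rw [div_self h, logb_one, mul_zero]
  have hx : (r1, r2) ∈ interior (Set.Ici (0 : ℝ) ×ˢ Set.Ici (0 : ℝ)) := by
    rw [interior_prod_eq, interior_Ici]
    exact ⟨hr1, hr2⟩
  have hplane := (convexOn_Rgw hp).add_partial_derivs_le hx hd1 hd2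
    (y := (condEntX p K', condEntY p K')) ⟨condEntX_nonneg hp hK', condEntY_nonneg hp hK'⟩
  have hR := Rgw_le_mutInfoW hp hk hK' le_rfl le_rfl
  have hL := mutInfoW_add_mul_le_Ffun (r1 := r1) (r2 := r2) hp hK' hl1 hl2 hQW0 hQW1 hQX0 hQX1
    hQY0 hQY1 hac
  simp only at hplane
  linarith

lemma isProb_Kstar_induced (hp : IsProb p) (hK : IsChannel K) {a : 𝒳 × 𝒴} (ha : p a ≠ 0) :
    IsProb (Kstar r1 r2 lam1 lam2 (outW p K) (condXW p K) (condYW p K) a) := by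
  obtain ⟨w, hw⟩ := hK.exists_ne_zero a
  obtain ⟨hW, hX, hY⟩ := induced_ne_zero hp hK (mul_ne_zero ha hw)
  exact isProb_Kstar (outW_nonneg hp hK) hW hX hY

theorem IsOptChannel.Rgw_eq_sum (hp : IsProb p)
    (hd1 : HasDerivAt (fun r => Rgw p r r2) (-lam1) r1)
    (hd2 : HasDerivAt (fun r => Rgw p r1 r) (-lam2) r2) (hl1 : 0 < lam1) (hl2 : 0 < lam2)
    (hK : IsOptChannel p r1 r2 K) :
    Rgw p r1 r2 = ∑ a, p a *
      (∑ w, K a w * logb 2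
          (K a w / Kstar r1 r2 lam1 lam2 (outW p K) (condXW p K) (condYW p K) a w)
        + Lam r1 r2 lam1 lam2 (outW p K) (condXW p K) (condYW p K) a.1 a.2) := by
  have hself := Ffun_self (r1 := r1) (r2 := r2) (lam1 := lam1) (lam2 := lam2) hp hK.2.1
  rw [hK.condEntX_eq hp hd1 hl1, hK.condEntY_eq hp hd2 hl2, hK.2.2.2.2, sub_self, sub_self,
    mul_zero, mul_zero, add_zero, add_zero, Ffun_eq_sum_ffunDensity] at hself
  rw [← hself]
  refine Finset.sum_congr rfl fun a _ => ?_
  rcases eq_or_ne (p a) 0 with ha | ha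
  · simp [ha]
  · rw [sum_mul_ffunDensity_eq (hK.2.1 a).2 fun w h =>
      induced_ne_zero hp hK.2.1 (mul_ne_zero ha h)]

theorem IsOptChannel.eq_Kstar (hp : IsProb p) (hr1 : 0 < r1) (hr2 : 0 < r2)
    (hd1 : HasDerivAt (fun r => Rgw p r r2) (-lam1) r1)
    (hd2 : HasDerivAt (fun r => Rgw p r1 r) (-lam2) r2) (hl1 : 0 < lam1) (hl2 : 0 < lam2)
    (hK : IsOptChannel p r1 r2 K) {a : 𝒳 × 𝒴} {w : Fin k} (ha : p a ≠ 0) (hKa : K a w ≠ 0) :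
    K a w = Kstar r1 r2 lam1 lam2 (outW p K) (condXW p K) (condYW p K) a w := by
  have hKc := hK.2.1
  set Ks := Kstar r1 r2 lam1 lam2 (outW p K) (condXW p K) (condYW p K)
  have hac : ∀ b, p b ≠ 0 → ∀ w, Ks b w = 0 → K b w = 0 := fun b hb w h => by
    by_contra hw
    obtain ⟨hW, hX, hY⟩ := induced_ne_zero hp hKc (mul_ne_zero hb hw)
    exact Kstar_ne_zero hW hX hY h
  have hsum : ∀ b, p b ≠ 0 → ∑ w, Ks b w ≤ ∑ w, K b w := fun b hb => by
    rw [(isProb_Kstar_induced hp hKc hb).2, (hKc b).2]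
  have hD : ∀ b ∈ Finset.univ, 0 ≤ p b * ∑ w, K b w * logb 2 (K b w / Ks b w) := fun b _ => by
    rcases eq_or_ne (p b) 0 with hb | hb
    · simp [hb]
    · exact mul_nonneg (hp.1 b) (sum_mul_logb_div_nonneg (hKc b).1
        (isProb_Kstar_induced hp hKc hb).1 (hsum b hb) (hac b hb))
  have hF := hK.Rgw_eq_sum hp hd1 hd2 hl1 hl2
  have hlow := Rgw_le_sum_Lam hp hr1 hr2 hd1 hd2 hl1.le hl2.le hK.1 (outW_nonneg hp hKc)
    (sum_outW hp hKc).le (condXW_nonneg hp hKc) sum_condXW_le_one (condYW_nonneg hp hKc)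
    sum_condYW_le_one fun b hb =>
      let ⟨w, hw⟩ := hKc.exists_ne_zero b
      ⟨w, induced_ne_zero hp hKc (mul_ne_zero hb hw)⟩
  simp only [mul_add, Finset.sum_add_distrib] at hF
  have hDa := (Finset.sum_eq_zero_iff_of_nonneg hD).1
    (le_antisymm (by linarith) (Finset.sum_nonneg hD)) a (Finset.mem_univ a)
  exact eq_of_sum_mul_logb_div_nonpos (hKc a).1 (isProb_Kstar_induced hp hKc ha).1 (hsum a ha)
    (hac a ha) ((mul_eq_zero.1 hDa).resolve_left ha).le hKa

end Optimal

end GW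

theorem Lambda_explicit_form_general
    {𝒳 𝒴 : Type*} [Fintype 𝒳] [Fintype 𝒴]
    (p : 𝒳 × 𝒴 → ℝ) (hp : IsProb p)
    (r1s r2s : ℝ) (hr1 : 0 < r1s) (hr2 : 0 < r2s)
    (lam1 lam2 : ℝ)
    (hd1 : HasDerivAt (fun r => Rgw p r r2s) (-lam1) r1s)
    (hd2 : HasDerivAt (fun r => Rgw p r1s r) (-lam2) r2s)
    (hl1 : 0 < lam1) (hl2 : 0 < lam2)
    {k : ℕ} (K : 𝒳 × 𝒴 → Fin k → ℝ) (hK : IsOptChannel p r1s r2s K) :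
    ∀ x y, 0 < p (x, y) → ∀ w, 0 < K (x, y) w →
      Lam r1s r2s lam1 lam2 (outW p K) (condXW p K) (condYW p K) x y
        = Real.logb 2 (K (x, y) w / outW p K w)
          + lam1 * (-Real.logb 2 (condXW p K w x) - r1s)
          + lam2 * (-Real.logb 2 (condYW p K w y) - r2s) := by
  intro x y hxy w hw
  obtain ⟨hW, hX, hY⟩ := induced_ne_zero hp hK.2.1 (mul_pos hxy hw).ne'
  change _ = ffunDensity r1s r2s lam1 lam2 K (outW p K) (condXW p K) (condYW p K) (x, y) w
  rw [ffunDensity_eq_logb_div_Kstar_add_Lam hw.ne' hW hX hY,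
    ← hK.eq_Kstar hp hr1 hr2 hd1 hd2 hl1 hl2 hxy.ne' hw.ne', div_self hw.ne', Real.logb_one,
    zero_add]

/-- For an optimal test channel `P*_{W|XY}` achieving
`R(r1*,r2*|P_XY)`, with induced output distribution `P_{W*}` and conditional
distributions `P_{X|W*}`, `P_{Y|W*}`: for every `(x,y)` in the support of
`P_XY` and every `w` in the support of `P*_{W|XY}(·|x,y)`,
`Λ(x,y|P_{W*},P_{X|W*},P_{Y|W*},λ1*,λ2*)
  = log(P*_{W|XY}(w|x,y)/P_{W*}(w)) + λ1*(log(1/P_{X|W*}(x|w)) - r1*)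
    + λ2*(log(1/P_{Y|W*}(y|w)) - r2*)`;
in particular the right-hand side does not depend on the choice of such `w`. -/
theorem Lambda_explicit_form
    {𝒳 𝒴 : Type*} [Fintype 𝒳] [Fintype 𝒴]
    (p : 𝒳 × 𝒴 → ℝ) (hp : IsProb p)
    (r1s r2s : ℝ) (hr1 : 0 < r1s) (hr2 : 0 < r2s)
    (hR : 0 < Rgw p r1s r2s)
    (lam1 lam2 : ℝ)
    (hd1 : HasDerivAt (fun r => Rgw p r r2s) (-lam1) r1s)
    (hd2 : HasDerivAt (fun r => Rgw p r1s r) (-lam2) r2s)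
    (hl1 : 0 < lam1) (hl2 : 0 < lam2)
    {k : ℕ} (K : 𝒳 × 𝒴 → Fin k → ℝ) (hK : IsOptChannel p r1s r2s K) :
    ∀ x y, 0 < p (x, y) → ∀ w, 0 < K (x, y) w →
      Lam r1s r2s lam1 lam2 (outW p K) (condXW p K) (condYW p K) x y
        = Real.logb 2 (K (x, y) w / outW p K w)
          + lam1 * (-Real.logb 2 (condXW p K w x) - r1s)
          + lam2 * (-Real.logb 2 (condYW p K w y) - r2s) :=
  Lambda_explicit_form_general p hp r1s r2s hr1 hr2 lam1 lam2 hd1 hd2 hl1 hl2 K hK
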